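/- For every real number ε > 0, the periodic schedule |11211211213| (i.e., S(t) = 1 if t ≡ 0, 1, 3, 4, 6, 7, 9 (mod 11), S(t) = 2 if t ≡ 2, 5, 8 (mod 11), and S(t) = 3 if t ≡ 10 (mod 11)) is valid for the real-valued pinwheel instance (11/7, 4 + ε, 11). -/

import Mathlib

/-- A schedule `S : ℤ → Fin k` is valid for the real-valued pinwheel instance
`a : Fin k → ℝ` if for every task `i`, every positive integer `l`, and every
integer `m`, task `i` is performed at least `l` times on the days
`t ∈ [m, m + ⌈l * a i⌉)`. -/
def PinValid {k : ℕ} (a : Fin k → ℝ) (S : ℤ → Fin k) : Prop :=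
  ∀ i : Fin k, ∀ l : ℕ, 0 < l → ∀ m : ℤ,
    (l : ℕ) ≤ ((Finset.Ico m (m + ⌈(l : ℝ) * a i⌉)).filter (fun t => S t = i)).card

/-- A real-valued pinwheel instance is schedulable if some schedule is valid for it. -/
def PinSchedulable {k : ℕ} (a : Fin k → ℝ) : Prop := ∃ S : ℤ → Fin k, PinValid a S

/-- The periodic schedule `|11211211213|`. -/
def S11211211213 : ℤ → Fin 3 := fun t =>
  if t % 11 = 10 then 2
  else if t % 11 = 2 ∨ t % 11 = 5 ∨ t % 11 = 8 then 1 else 0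

/-- Number of occurrences of task `i` in the window `[m, m+n)`. -/
noncomputable def cnt11 (i : Fin 3) (m n : ℤ) : ℕ :=
  ((Finset.Ico m (m + n)).filter (fun t => S11211211213 t = i)).card

lemma S_shift (t c : ℤ) (hc : (11:ℤ) ∣ c) :
    S11211211213 (t + c) = S11211211213 t := by
  unfold S11211211213
  have h : (t + c) % 11 = t % 11 := by omega
  rw [h]

lemma cnt11_shift (i : Fin 3) (m n c : ℤ) (hc : (11:ℤ) ∣ c) :
    cnt11 i (m + c) n = cnt11 i m n := by
  unfold cnt11
  rw [show m + c + n = (m + n) + c by ring]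
  symm
  apply Finset.card_nbij (i := fun t => t + c)
  · intro a ha
    simp only [Finset.mem_coe, Finset.mem_filter, Finset.mem_Ico] at *
    exact ⟨⟨by omega, by omega⟩, by rw [S_shift _ _ hc]; exact ha.2⟩
  · intro a _ b _ hab
    simpa using hab
  · intro b hb
    simp only [Finset.mem_coe, Finset.mem_filter, Finset.mem_Ico, Set.mem_image] at *
    refine ⟨b - c, ⟨⟨by omega, by omega⟩, ?_⟩, by ring⟩
    have h := S_shift (b - c) c hc
    rw [show b - c + c = b by ring] at h
    rw [← h]; exact hb.2

lemma cnt11_emod (i : Fin 3) (m n : ℤ) : cnt11 i m n = cnt11 i (m % 11) n := by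
  have h := cnt11_shift i (m % 11) n (11 * (m / 11)) ⟨m / 11, rfl⟩
  rw [show m % 11 + 11 * (m / 11) = m by omega] at h
  exact h

lemma cnt11_period : ∀ (i : Fin 3), ∀ r ∈ Finset.Ico (0:ℤ) 11,
    cnt11 i r 11 = ![7,3,1] i := by decide

lemma cnt11_period' (i : Fin 3) (m : ℤ) : cnt11 i m 11 = ![7,3,1] i := by
  rw [cnt11_emod]
  exact cnt11_period i (m % 11) (by simp [Finset.mem_Ico]; omega)

lemma cnt11_mono (i : Fin 3) (m n n' : ℤ) (h : n ≤ n') :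
    cnt11 i m n ≤ cnt11 i m n' := by
  apply Finset.card_le_card
  apply Finset.filter_subset_filter
  exact Finset.Ico_subset_Ico le_rfl (by omega)

lemma cnt11_split (i : Fin 3) (m n : ℤ) (hn : 0 ≤ n) :
    cnt11 i m (n + 11) = cnt11 i m n + ![7,3,1] i := by
  unfold cnt11
  rw [← cnt11_period' i (m + n)]
  unfold cnt11
  rw [show m + (n + 11) = (m + n) + 11 by ring]
  rw [← Finset.Ico_union_Ico_eq_Ico (by omega : m ≤ m + n) (by omega : m + n ≤ m + n + 11),
    Finset.filter_union]
  apply Finset.card_union_of_disjoint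
  exact Finset.disjoint_filter_filter (Finset.Ico_disjoint_Ico_consecutive m (m+n) (m+n+11))

lemma base0 : ∀ l ∈ Finset.Icc 1 7, ∀ r ∈ Finset.Ico (0:ℤ) 11,
    (l:ℕ) ≤ cnt11 0 r (((11*l+6)/7 : ℕ) : ℤ) := by decide

lemma base1 : ∀ l ∈ Finset.Icc 1 3, ∀ r ∈ Finset.Ico (0:ℤ) 11,
    (l:ℕ) ≤ cnt11 1 r ((4*l+1 : ℕ) : ℤ) := by decide

lemma key0 : ∀ l : ℕ, 0 < l → ∀ m : ℤ, l ≤ cnt11 0 m (((11*l+6)/7 : ℕ) : ℤ) := by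
  intro l
  induction l using Nat.strong_induction_on with
  | _ l ih =>
    intro hl m
    by_cases h7 : l ≤ 7
    · rw [cnt11_emod]
      exact base0 l (by simp; omega) (m % 11) (by simp [Finset.mem_Ico]; omega)
    · have hl' : 0 < l - 7 := by omega
      have ih' := ih (l - 7) (by omega) hl' m
      have hL : (((11*l+6)/7 : ℕ) : ℤ) = ((11*(l-7)+6)/7 : ℕ) + 11 := by
        have : (11*l+6)/7 = (11*(l-7)+6)/7 + 11 := by omega
        rw [this]; push_cast; ring
      rw [hL, cnt11_split 0 m _ (by positivity)]
      simp only [Matrix.cons_val_zero] at *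
      omega

lemma key1 : ∀ l : ℕ, 0 < l → ∀ m : ℤ, l ≤ cnt11 1 m ((4*l+1 : ℕ) : ℤ) := by
  intro l
  induction l using Nat.strong_induction_on with
  | _ l ih =>
    intro hl m
    by_cases h3 : l ≤ 3
    · rw [cnt11_emod]
      exact base1 l (by simp; omega) (m % 11) (by simp [Finset.mem_Ico]; omega)
    · have ih' := ih (l - 3) (by omega) (by omega) m
      have hmono := cnt11_mono 1 m (((4*(l-3)+1 : ℕ) : ℤ) + 11) ((4*l+1 : ℕ) : ℤ)
        (by push_cast; omega)
      rw [cnt11_split 1 m _ (by positivity)] at hmono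
      simp only [Matrix.cons_val_one, Matrix.head_cons, Matrix.cons_val_zero] at *
      omega

lemma key2 : ∀ l : ℕ, 0 < l → ∀ m : ℤ, l ≤ cnt11 2 m ((11*l : ℕ) : ℤ) := by
  intro l
  induction l using Nat.strong_induction_on with
  | _ l ih =>
    intro hl m
    by_cases h1 : l = 1
    · subst h1
      have := cnt11_period' 2 m
      simp only [Matrix.cons_val_two, Matrix.tail_cons, Matrix.head_cons] at this
      simpa using this.ge
    · have ih' := ih (l - 1) (by omega) (by omega) m
      have hL : ((11*l : ℕ) : ℤ) = ((11*(l-1) : ℕ) : ℤ) + 11 := by push_cast; omega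
      rw [hL, cnt11_split 2 m _ (by positivity)]
      simp only [Matrix.cons_val_two, Matrix.tail_cons, Matrix.head_cons] at *
      omega

theorem valid_11211211213 (ε : ℝ) (hε : 0 < ε) :
    PinValid ![(11 : ℝ) / 7, 4 + ε, 11] S11211211213 := by
  intro i l hl m
  fin_cases i
  · simp only [Fin.zero_eta, Matrix.cons_val_zero]
    have hceil : (((11*l+6)/7 : ℕ) : ℤ) ≤ ⌈(l : ℝ) * (11 / 7)⌉ := by
      set q : ℕ := (11*l+6)/7 with hq
      have h1 : (((q : ℤ) - 1 : ℤ) : ℝ) < (l : ℝ) * (11 / 7) := by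
        have h2' : 7 * q ≤ 11*l+6 := by omega
        have h3 : (7 : ℝ) * (q : ℝ) ≤ 11*(l:ℝ)+6 := by exact_mod_cast h2'
        push_cast
        nlinarith
      have := Int.lt_ceil.mpr h1
      push_cast at this ⊢
      omega
    calc (l:ℕ) ≤ cnt11 0 m (((11*l+6)/7 : ℕ) : ℤ) := key0 l hl m
      _ ≤ cnt11 0 m ⌈(l : ℝ) * (11 / 7)⌉ := cnt11_mono 0 m _ _ hceil
  · simp only [Fin.mk_one, Matrix.cons_val_one, Matrix.head_cons]
    have hceil : ((4*l+1 : ℕ) : ℤ) ≤ ⌈(l : ℝ) * (4 + ε)⌉ := by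
      have h1 : (((4*(l:ℤ)) : ℤ) : ℝ) < (l : ℝ) * (4 + ε) := by
        push_cast
        have : (1:ℝ) ≤ (l:ℝ) := by exact_mod_cast hl
        nlinarith
      have := Int.lt_ceil.mpr h1
      push_cast at this ⊢
      omega
    calc (l:ℕ) ≤ cnt11 1 m ((4*l+1 : ℕ) : ℤ) := key1 l hl m
      _ ≤ cnt11 1 m ⌈(l : ℝ) * (4 + ε)⌉ := cnt11_mono 1 m _ _ hceil
  · simp only [Matrix.cons_val_two, Matrix.tail_cons, Matrix.head_cons]
    have hceil : ((11*l : ℕ) : ℤ) ≤ ⌈(l : ℝ) * 11⌉ := by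
      have h1 : (((11*(l:ℤ) - 1) : ℤ) : ℝ) < (l : ℝ) * 11 := by push_cast; nlinarith
      have := Int.lt_ceil.mpr h1
      push_cast at this ⊢
      omega
    calc (l:ℕ) ≤ cnt11 2 m ((11*l : ℕ) : ℤ) := key2 l hl m
      _ ≤ cnt11 2 m ⌈(l : ℝ) * 11⌉ := cnt11_mono 2 m _ _ hceil
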